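/- arXiv:1305.4141 — 5 statements merged into one kernel-verified Lean document; each statement's English description precedes it below -/
import Mathlib

section
/- For any code C over an alphabet of size r and any positive integer k, K(C^k) ≤ K(C)^k, where K(C) = Σ_{x∈C} r^{-len(x)} is the Kraft sum. -/
open Finset Pointwise

instance {A : Type*} [DecidableEq A] : DecidableEq (FreeMonoid A) :=
  inferInstanceAs (DecidableEq (List A))

/-- A code `C` is uniquely decipherable: the concatenation (product) map is
injective on finite sequences of words from `C`. -/
def IsUD {A : Type*} (C : Finset (FreeMonoid A)) : Prop :=
  ∀ l₁ l₂ : List (FreeMonoid A), (∀ w ∈ l₁, w ∈ C) → (∀ w ∈ l₂, w ∈ C) →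
    l₁.prod = l₂.prod → l₁ = l₂

/-- The Kraft sum of a code over an alphabet of size `r`. -/
noncomputable def Kraft {A : Type*} (r : ℕ) (C : Finset (FreeMonoid A)) : ℝ :=
  ∑ x ∈ C, (r : ℝ) ^ (-(x.length : ℤ))

/-- `D` is finer than `C` (refines `C`): every word of `C` is the concatenation
of a nonempty finite sequence of words from `D`. -/
def Refines {A : Type*} (C D : Finset (FreeMonoid A)) : Prop :=
  ∀ w ∈ C, ∃ l : List (FreeMonoid A), l ≠ [] ∧ (∀ v ∈ l, v ∈ D) ∧ l.prod = w

/-! Each word of `C ^ k` is the product of at least one `k`-tuple of words of `C`, and the Kraft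
weight `r ^ (-|x|)` is multiplicative in the word, so the sum over `C ^ k` is at most the sum over
all `k`-tuples, which factors as `K(C) ^ k`. -/

namespace Finset

variable {M R : Type*} [Monoid M] [DecidableEq M] [CommSemiring R] [PartialOrder R]
  [IsOrderedRing R]

theorem sum_mul_le_sum_mul_sum (f : M →* R) (hf : ∀ x, 0 ≤ f x) (s t : Finset M) :
    ∑ x ∈ s * t, f x ≤ (∑ x ∈ s, f x) * ∑ x ∈ t, f x := by
  rw [← image_mul_product, sum_mul_sum, ← sum_product']
  simp only [← map_mul]
  exact sum_image_le_of_nonneg fun x _ => hf x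

theorem sum_pow_le_pow_sum (f : M →* R) (hf : ∀ x, 0 ≤ f x) (s : Finset M) (k : ℕ) :
    ∑ x ∈ s ^ k, f x ≤ (∑ x ∈ s, f x) ^ k := by
  induction k with
  | zero => simp [← singleton_one]
  | succ k ih =>
    rw [pow_succ, pow_succ]
    exact (sum_mul_le_sum_mul_sum f hf _ _).trans
      (mul_le_mul_of_nonneg_right ih (sum_nonneg fun x _ => hf x))

end Finset

@[simps]
def FreeMonoid.powLengthHom {A R : Type*} [Monoid R] (c : R) : FreeMonoid A →* R where
  toFun x := c ^ x.length
  map_one' := pow_zero c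
  map_mul' x y := by rw [FreeMonoid.length_mul, pow_add]

theorem kraft_eq_sum_powLengthHom {A : Type*} (r : ℕ) (C : Finset (FreeMonoid A)) :
    Kraft r C = ∑ x ∈ C, FreeMonoid.powLengthHom (r : ℝ)⁻¹ x := by
  simp only [Kraft, FreeMonoid.powLengthHom_apply, zpow_neg, zpow_natCast, inv_pow]

theorem kraft_pow_le {A : Type*} [DecidableEq A] (r : ℕ) (C : Finset (FreeMonoid A)) (k : ℕ) :
    Kraft r (C ^ k) ≤ Kraft r C ^ k := by
  simp only [kraft_eq_sum_powLengthHom]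
  exact Finset.sum_pow_le_pow_sum _ (fun x => pow_nonneg (by positivity) _) C k

theorem stmt_2_general {A : Type*} [Fintype A] [DecidableEq A]
    (C : Finset (FreeMonoid A))
    (k : ℕ) :
    Kraft (Fintype.card A) (C ^ k) ≤ (Kraft (Fintype.card A) C) ^ k :=
  kraft_pow_le _ C k

theorem stmt_2 {A : Type*} [Fintype A] [DecidableEq A]
    (hr : 1 ≤ Fintype.card A)
    (C : Finset (FreeMonoid A)) (hC : (1 : FreeMonoid A) ∉ C)
    (k : ℕ) (hk : 1 ≤ k) :
    Kraft (Fintype.card A) (C ^ k) ≤ (Kraft (Fintype.card A) C) ^ k :=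
  stmt_2_general C k
end

section
/- A code C is uniquely decipherable if and only if K(C^k) = K(C)^k for all positive integers k. -/
/-!
The weight `x ↦ r ^ (-|x|)` is multiplicative, so `K(C) ^ k` is the sum, over all `k`-tuples of
code words, of the weight of their concatenation, whereas `K(C ^ k)` counts each concatenation once.
All weights being positive, the two agree exactly when concatenation is injective on `k`-tuples.
Injectivity for every `k` is unique decipherability: cancelling the common leading factors of two
distinct factorizations leaves factorizations `a`, `b` of one word that start with different code
words, and then `a ++ b` and `b ++ a` are distinct factorizations with the same number of factors.
-/

open Finset Pointwise

namespace Finset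

theorem pow_eq_image_piFinset {M : Type*} [Monoid M] [DecidableEq M] (s : Finset M) (k : ℕ) :
    s ^ k = (Fintype.piFinset fun _ : Fin k => s).image fun g => (List.ofFn g).prod := by
  ext w
  simp only [mem_pow, mem_image, Fintype.mem_piFinset]
  constructor
  · rintro ⟨f, rfl⟩
    exact ⟨fun i => f i, fun i => (f i).2, rfl⟩
  · rintro ⟨g, hg, rfl⟩
    exact ⟨fun i => ⟨g i, hg i⟩, rfl⟩

theorem sum_piFinset_map_ofFn_prod {M R : Type*} [Monoid M] [CommSemiring R] (φ : M →* R)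
    (s : Finset M) (k : ℕ) :
    ∑ g ∈ Fintype.piFinset (fun _ : Fin k => s), φ (List.ofFn g).prod = (∑ x ∈ s, φ x) ^ k := by
  simp only [map_list_prod, List.map_ofFn, List.prod_ofFn, Function.comp_apply]
  rw [← prod_univ_sum, prod_const, card_univ, Fintype.card_fin]

theorem sum_image_eq_iff_injOn {ι κ M : Type*} [DecidableEq κ] [AddCommMonoid M] [PartialOrder M]
    [IsOrderedCancelAddMonoid M] {s : Finset ι} {g : ι → κ} {f : κ → M}
    (hf : ∀ y ∈ s.image g, 0 < f y) :
    ∑ y ∈ s.image g, f y = ∑ x ∈ s, f (g x) ↔ Set.InjOn g s := by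
  classical
  refine ⟨fun h => ?_, sum_image⟩
  by_contra hg
  obtain ⟨x₁, hx₁, x₂, hx₂, hgx, hx⟩ : ∃ x₁ ∈ s, ∃ x₂ ∈ s, g x₁ = g x₂ ∧ x₁ ≠ x₂ := by
    simpa [Set.InjOn] using hg
  have himage : s.image g = (s.erase x₂).image g := by
    refine (image_subset_image (erase_subset _ _)).antisymm' fun y hy => ?_
    obtain ⟨x, hx', rfl⟩ := mem_image.1 hy
    by_cases hxx : x = x₂
    · exact mem_image.2 ⟨x₁, mem_erase.2 ⟨hx, hx₁⟩, hxx ▸ hgx⟩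
    · exact mem_image_of_mem g (mem_erase.2 ⟨hxx, hx'⟩)
  have hf' : ∀ x ∈ s, 0 < f (g x) := fun x hx => hf _ (mem_image_of_mem g hx)
  refine h.not_lt ?_
  calc ∑ y ∈ s.image g, f y = ∑ y ∈ (s.erase x₂).image g, f y := by rw [himage]
    _ ≤ ∑ x ∈ s.erase x₂, f (g x) :=
        sum_image_le_of_nonneg fun y hy => (hf y (himage ▸ hy)).le
    _ < ∑ x ∈ s, f (g x) :=
        sum_lt_sum_of_subset (erase_subset _ _) hx₂ (notMem_erase _ _) (hf' _ hx₂)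
          fun x hx _ => (hf' x hx).le

end Finset

namespace FreeMonoid

variable {A : Type*}

theorem list_prod_eq_one_iff {l : List (FreeMonoid A)} : l.prod = 1 ↔ ∀ x ∈ l, x = 1 := by
  rw [← toList.injective.eq_iff, toList_prod, toList_one, List.flatten_eq_nil_iff]
  simp only [List.mem_map, forall_exists_index, and_imp, forall_apply_eq_imp_iff₂, ← toList_one,
    toList.injective.eq_iff]

theorem exists_cons_suffix_ne_of_prod_eq :
    ∀ {l₁ l₂ : List (FreeMonoid A)}, 1 ∉ l₁ → 1 ∉ l₂ → l₁.prod = l₂.prod → l₁ ≠ l₂ →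
      ∃ u v t₁ t₂, u ≠ v ∧ u :: t₁ <:+ l₁ ∧ v :: t₂ <:+ l₂ ∧ (u :: t₁).prod = (v :: t₂).prod
  | [], [], _, _, _, hne => absurd rfl hne
  | [], v :: _, _, h₂, hp, _ =>
      absurd (list_prod_eq_one_iff.1 hp.symm v List.mem_cons_self ▸ List.mem_cons_self) h₂
  | u :: _, [], h₁, _, hp, _ =>
      absurd (list_prod_eq_one_iff.1 hp u List.mem_cons_self ▸ List.mem_cons_self) h₁
  | u :: t₁, v :: t₂, h₁, h₂, hp, hne => by
    by_cases huv : u = v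
    · subst huv
      obtain ⟨u', v', t₁', t₂', hne', hs₁, hs₂, hp'⟩ :=
        exists_cons_suffix_ne_of_prod_eq (l₁ := t₁) (l₂ := t₂) (fun h => h₁ (.tail _ h))
          (fun h => h₂ (.tail _ h)) (mul_left_cancel hp) (fun h => hne (h ▸ rfl))
      exact ⟨u', v', t₁', t₂', hne', hs₁.trans (List.suffix_cons _ _),
        hs₂.trans (List.suffix_cons _ _), hp'⟩
    · exact ⟨u, v, t₁, t₂, huv, List.suffix_refl _, List.suffix_refl _, hp⟩

end FreeMonoid

section Kraft

variable {A : Type*}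

noncomputable def kraftWeight (r : ℕ) : FreeMonoid A →* ℝ where
  toFun x := (r : ℝ)⁻¹ ^ x.length
  map_one' := by simp
  map_mul' x y := by simp [pow_add]

theorem kraft_eq_sum_kraftWeight (r : ℕ) (C : Finset (FreeMonoid A)) :
    Kraft r C = ∑ x ∈ C, kraftWeight r x := by
  simp [Kraft, kraftWeight, zpow_neg, inv_pow]

theorem kraftWeight_card_pos [Fintype A] (x : FreeMonoid A) :
    0 < kraftWeight (Fintype.card A) x := by
  cases hx : x.toList with
  | nil => simp [kraftWeight, FreeMonoid.length, hx]
  | cons a _ =>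
    have : 0 < (Fintype.card A : ℝ) := by exact_mod_cast Fintype.card_pos_iff.2 ⟨a⟩
    exact pow_pos (inv_pos.2 this) _

theorem kraft_pow_eq_iff_injOn [Fintype A] [DecidableEq A] (C : Finset (FreeMonoid A)) (k : ℕ) :
    Kraft (Fintype.card A) (C ^ k) = Kraft (Fintype.card A) C ^ k ↔
      Set.InjOn (fun g : Fin k → FreeMonoid A => (List.ofFn g).prod)
        ↑(Fintype.piFinset fun _ : Fin k => C) := by
  rw [kraft_eq_sum_kraftWeight, kraft_eq_sum_kraftWeight, pow_eq_image_piFinset,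
    ← sum_piFinset_map_ofFn_prod]
  exact sum_image_eq_iff_injOn fun x _ => kraftWeight_card_pos x

end Kraft

theorem Fintype.mem_piFinset_const_iff_forall_mem_ofFn {α : Type*} {k : ℕ} {s : Finset α}
    {g : Fin k → α} : g ∈ Fintype.piFinset (fun _ => s) ↔ ∀ w ∈ List.ofFn g, w ∈ s := by
  simp [List.mem_ofFn']

theorem isUD_iff_injOn_ofFn_prod {A : Type*} {C : Finset (FreeMonoid A)} (hC : 1 ∉ C) :
    IsUD C ↔ ∀ k, Set.InjOn (fun g : Fin k → FreeMonoid A => (List.ofFn g).prod)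
      ↑(Fintype.piFinset fun _ : Fin k => C) := by
  simp only [Finset.mem_coe, Set.InjOn, Fintype.mem_piFinset_const_iff_forall_mem_ofFn]
  constructor
  · exact fun hUD k g₁ hg₁ g₂ hg₂ hprod => List.ofFn_injective (hUD _ _ hg₁ hg₂ hprod)
  · intro hinj l₁ l₂ h₁ h₂ hprod
    by_contra hne
    obtain ⟨u, v, t₁, t₂, huv, hs₁, hs₂, hp⟩ := FreeMonoid.exists_cons_suffix_ne_of_prod_eq
      (fun h => hC (h₁ 1 h)) (fun h => hC (h₂ 1 h)) hprod hne
    set m₁ := (u :: t₁) ++ (v :: t₂)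
    set m₂ := (v :: t₂) ++ (u :: t₁)
    have hlen : m₂.length = m₁.length := by simp only [m₁, m₂, List.length_append]; omega
    obtain ⟨g₂, hg₂⟩ : ∃ g : Fin m₁.length → FreeMonoid A, List.ofFn g = m₂ :=
      hlen ▸ ⟨m₂.get, List.ofFn_get m₂⟩
    have hC₁ : ∀ w ∈ m₁, w ∈ C := by
      simp only [m₁, List.mem_append]
      exact fun w hw => hw.elim (fun hw => h₁ w (hs₁.subset hw)) fun hw => h₂ w (hs₂.subset hw)
    have hC₂ : ∀ w ∈ m₂, w ∈ C := fun w hw => hC₁ w (List.perm_append_comm.mem_iff.1 hw)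
    have hg : m₁.get = g₂ := hinj _ (by rwa [List.ofFn_get]) (by rwa [hg₂])
      (by rw [List.ofFn_get, hg₂, List.prod_append, List.prod_append, hp])
    have hm : m₁ = m₂ := by rw [← hg₂, ← hg, List.ofFn_get]
    exact huv (List.cons.inj hm).1

theorem stmt_3_general {A : Type*} [Fintype A] [DecidableEq A]
    (C : Finset (FreeMonoid A)) (hC : (1 : FreeMonoid A) ∉ C) :
    IsUD C ↔ ∀ k : ℕ, 1 ≤ k →
      Kraft (Fintype.card A) (C ^ k) = (Kraft (Fintype.card A) C) ^ k := by
  simp only [isUD_iff_injOn_ofFn_prod hC, kraft_pow_eq_iff_injOn]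
  refine ⟨fun h k _ => h k, fun h k => ?_⟩
  rcases k.eq_zero_or_pos with rfl | hk
  · exact (Function.injective_of_subsingleton _).injOn
  · exact h k hk

theorem stmt_3 {A : Type*} [Fintype A] [DecidableEq A]
    (hr : 1 ≤ Fintype.card A)
    (C : Finset (FreeMonoid A)) (hC : (1 : FreeMonoid A) ∉ C) :
    IsUD C ↔ ∀ k : ℕ, 1 ≤ k →
      Kraft (Fintype.card A) (C ^ k) = (Kraft (Fintype.card A) C) ^ k :=
  stmt_3_general C hC
end

section
/- The refinement relation C ≤ D, defined by C ⊆ con[D] (every word of C is a concatenation of words of D), is a partial order on the set of uniquely decipherable codes; in particular, if C ≤ D and D ≤ C for UD codes C and D, then C = D. -/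
open Finset Pointwise

/-!
Refining a factorization of a word over `D` into factorizations over `E` can only make it
longer. For antisymmetry take `w ∈ C` and a factorization `l` of it over `D`; refining `l`
back over `C` gives a factorization of `w` over `C` of length at least `|l|`, which by unique
decipherability is the trivial one `[w]`. Hence `l = [w]` and `w ∈ D`.
-/

namespace Refines

variable {A : Type*} {C D E : Finset (FreeMonoid A)}

theorem refl (C : Finset (FreeMonoid A)) : Refines C C :=
  fun w hw => ⟨[w], List.cons_ne_nil w [], by simpa using hw, List.prod_singleton⟩

theorem exists_longer_factorization (hDE : Refines D E) {l : List (FreeMonoid A)}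
    (hl : ∀ v ∈ l, v ∈ D) :
    ∃ l' : List (FreeMonoid A), l.length ≤ l'.length ∧ (∀ u ∈ l', u ∈ E) ∧ l'.prod = l.prod := by
  induction l with
  | nil => exact ⟨[], le_rfl, by simp, rfl⟩
  | cons v t ih =>
    obtain ⟨m, hm_ne, hmE, hm_prod⟩ := hDE v (hl v List.mem_cons_self)
    obtain ⟨l', hlen, hl'E, hl'_prod⟩ := ih fun u hu => hl u (List.mem_cons_of_mem v hu)
    refine ⟨m ++ l', ?_, ?_, by rw [List.prod_append, List.prod_cons, hm_prod, hl'_prod]⟩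
    · have := List.length_pos_iff.mpr hm_ne
      simp only [List.length_cons, List.length_append]
      omega
    · simpa only [List.mem_append] using fun u hu => hu.elim (hmE u) (hl'E u)

theorem trans (hCD : Refines C D) (hDE : Refines D E) : Refines C E := by
  intro w hw
  obtain ⟨l, hl_ne, hlD, rfl⟩ := hCD w hw
  obtain ⟨l', hlen, hl'E, hl'_prod⟩ := hDE.exists_longer_factorization hlD
  have hl'_ne : l' ≠ [] := List.length_pos_iff.mp ((List.length_pos_iff.mpr hl_ne).trans_le hlen)
  exact ⟨l', hl'_ne, hl'E, hl'_prod⟩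

theorem subset_of_isUD (hC : IsUD C) (hCD : Refines C D) (hDC : Refines D C) : C ⊆ D := by
  intro w hw
  obtain ⟨l, hl_ne, hlD, hl_prod⟩ := hCD w hw
  obtain ⟨l', hlen, hl'C, hl'_prod⟩ := hDC.exists_longer_factorization hlD
  have hl' : l' = [w] := hC l' [w] hl'C (by simpa using hw) (by rw [hl'_prod, hl_prod]; simp)
  obtain ⟨v, rfl⟩ : ∃ v, l = [v] := by
    rw [← List.length_eq_one_iff]
    have := List.length_pos_iff.mpr hl_ne
    simp only [hl', List.length_singleton] at hlen
    omega
  rw [List.prod_singleton] at hl_prod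
  exact hl_prod ▸ hlD v (List.mem_singleton_self v)

theorem antisymm (hC : IsUD C) (hD : IsUD D) (hCD : Refines C D) (hDC : Refines D C) :
    C = D :=
  (subset_of_isUD hC hCD hDC).antisymm (subset_of_isUD hD hDC hCD)

end Refines

theorem stmt_6_general {A : Type*} :
    (∀ C : Finset (FreeMonoid A), (1 : FreeMonoid A) ∉ C → Refines C C) ∧
    (∀ C D E : Finset (FreeMonoid A), (1 : FreeMonoid A) ∉ C → (1 : FreeMonoid A) ∉ D →
      (1 : FreeMonoid A) ∉ E → Refines C D → Refines D E → Refines C E) ∧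
    (∀ C D : Finset (FreeMonoid A), (1 : FreeMonoid A) ∉ C → (1 : FreeMonoid A) ∉ D →
      IsUD C → IsUD D → Refines C D → Refines D C → C = D) :=
  ⟨fun C _ => Refines.refl C,
    fun _ _ _ _ _ _ hCD hDE => hCD.trans hDE,
    fun _ _ _ _ hC hD hCD hDC => Refines.antisymm hC hD hCD hDC⟩

/-- Refinement is a partial order on UD codes; reflexivity and transitivity hold in
general, and antisymmetry holds for UD codes. -/
theorem stmt_6 {A : Type*} [Fintype A] [DecidableEq A] :
    (∀ C : Finset (FreeMonoid A), (1 : FreeMonoid A) ∉ C → Refines C C) ∧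
    (∀ C D E : Finset (FreeMonoid A), (1 : FreeMonoid A) ∉ C → (1 : FreeMonoid A) ∉ D →
      (1 : FreeMonoid A) ∉ E → Refines C D → Refines D E → Refines C E) ∧
    (∀ C D : Finset (FreeMonoid A), (1 : FreeMonoid A) ∉ C → (1 : FreeMonoid A) ∉ D →
      IsUD C → IsUD D → Refines C D → Refines D C → C = D) :=
  stmt_6_general
end

section
/- If C is a uniquely decipherable code over an alphabet of size r, then K(C) = Σ_{x∈C} r^{-len(x)} ≤ 1 (McMillan's theorem). -/
open Finset Pointwise

private lemma len_listProd {A : Type*} (l : List (FreeMonoid A)) :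
    l.prod.length = (l.map FreeMonoid.length).sum := by
  induction l with
  | nil => rfl
  | cons a t ih => simp [FreeMonoid.length_mul, ih]

private lemma card_filter_len_le {A : Type*} [Fintype A] [DecidableEq A]
    (hA : Nonempty A) (T : Finset (FreeMonoid A)) (ℓ : ℕ) :
    (T.filter fun w => FreeMonoid.length w = ℓ).card ≤ Fintype.card A ^ ℓ := by
  classical
  obtain ⟨d⟩ := hA
  have h1 : (T.filter fun w => FreeMonoid.length w = ℓ).card
      ≤ (Finset.univ : Finset (Fin ℓ → A)).card := by
    refine Finset.card_le_card_of_injOn (t := Finset.univ)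
      (fun w i => (FreeMonoid.toList w).getD i d) (fun _ _ => Finset.mem_univ _) ?_
    intro w₁ h₁ w₂ h₂ h
    simp only [Finset.coe_filter, Set.mem_setOf_eq] at h₁ h₂
    have hl₁ : (FreeMonoid.toList w₁).length = ℓ := h₁.2
    have hl₂ : (FreeMonoid.toList w₂).length = ℓ := h₂.2
    apply FreeMonoid.toList.injective
    apply List.ext_getElem (by rw [hl₁, hl₂])
    intro n hn₁ hn₂
    have := congrFun h ⟨n, by rw [← hl₁]; exact hn₁⟩
    simp only [] at this
    rw [List.getD_eq_getElem _ _ hn₁, List.getD_eq_getElem _ _ hn₂] at this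
    exact this
  calc (T.filter fun w => FreeMonoid.length w = ℓ).card
      ≤ (Finset.univ : Finset (Fin ℓ → A)).card := h1
    _ = Fintype.card A ^ ℓ := by
        rw [Finset.card_univ, Fintype.card_fun, Fintype.card_fin]

/-- McMillan's theorem. -/
theorem stmt_7 {A : Type*} [Fintype A] [DecidableEq A]
    (hr : 1 ≤ Fintype.card A)
    (C : Finset (FreeMonoid A)) (hC : (1 : FreeMonoid A) ∉ C) (hUD : IsUD C) :
    Kraft (Fintype.card A) C ≤ 1 := by
  classical
  rcases C.eq_empty_or_nonempty with rfl | hne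
  · simp [Kraft]
  have hA : Nonempty A := Fintype.card_pos_iff.mp hr
  set r := Fintype.card A with hrdef
  have hq1 : (1:ℝ) ≤ (r:ℝ) := by exact_mod_cast hr
  have hq0 : (0:ℝ) < (r:ℝ) := lt_of_lt_of_le one_pos hq1
  set s : ℝ := (r:ℝ)⁻¹ with hs
  have hs0 : 0 < s := inv_pos.mpr hq0
  have hKraft : Kraft r C = ∑ x ∈ C, s ^ x.length := by
    unfold Kraft
    refine Finset.sum_congr rfl fun x _ => ?_
    rw [hs, zpow_neg, ← inv_zpow, zpow_natCast]
  set L := C.sup FreeMonoid.length with hL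
  have hlen : ∀ w ∈ C, 1 ≤ FreeMonoid.length w ∧ FreeMonoid.length w ≤ L := by
    intro w hw
    refine ⟨Nat.one_le_iff_ne_zero.mpr (fun h => hC ((FreeMonoid.length_eq_zero.mp h) ▸ hw)),
      Finset.le_sup hw⟩
  have hLpos : 1 ≤ L := by
    obtain ⟨w, hw⟩ := hne
    exact le_trans (hlen w hw).1 (Finset.le_sup hw)
  -- key bound : K^n ≤ n * L
  have key : ∀ n : ℕ, 1 ≤ n → (Kraft r C) ^ n ≤ (n : ℝ) * (L : ℝ) := by
    intro n hn
    set P := Fintype.piFinset (fun _ : Fin n => C) with hP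
    set π : (Fin n → FreeMonoid A) → FreeMonoid A := fun g => (List.ofFn g).prod with hπ
    have hlenπ : ∀ g : Fin n → FreeMonoid A, (π g).length = ∑ i, (g i).length := by
      intro g
      rw [hπ]
      simp [len_listProd, List.map_ofFn, List.sum_ofFn, Function.comp]
    have hstep1 : (Kraft r C) ^ n = ∑ g ∈ P, s ^ (π g).length := by
      rw [hKraft]
      calc (∑ x ∈ C, s ^ x.length) ^ n
          = ∏ _i : Fin n, ∑ x ∈ C, s ^ x.length := by
            rw [Finset.prod_const, Finset.card_univ, Fintype.card_fin]
        _ = ∑ g ∈ P, ∏ i, s ^ (g i).length := Finset.prod_univ_sum _ _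
        _ = ∑ g ∈ P, s ^ (π g).length := by
            refine Finset.sum_congr rfl fun g _ => ?_
            rw [Finset.prod_pow_eq_pow_sum, hlenπ]
    have hinj : ∀ g₁ ∈ P, ∀ g₂ ∈ P, π g₁ = π g₂ → g₁ = g₂ := by
      intro g₁ h₁ g₂ h₂ h
      rw [hP, Fintype.mem_piFinset] at h₁ h₂
      have := hUD (List.ofFn g₁) (List.ofFn g₂)
        (by intro w hw; rw [List.mem_ofFn] at hw; obtain ⟨i, rfl⟩ := hw; exact h₁ i)
        (by intro w hw; rw [List.mem_ofFn] at hw; obtain ⟨i, rfl⟩ := hw; exact h₂ i) h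
      exact List.ofFn_injective this
    set T := P.image π with hT
    have hstep2 : ∑ g ∈ P, s ^ (π g).length = ∑ w ∈ T, s ^ w.length := by
      rw [hT]
      exact (Finset.sum_image (f := fun w => s ^ FreeMonoid.length w) hinj).symm
    have hmem : ∀ w ∈ T, FreeMonoid.length w ∈ Finset.Icc n (n * L) := by
      intro w hw
      rw [hT, Finset.mem_image] at hw
      obtain ⟨g, hg, rfl⟩ := hw
      rw [hP, Fintype.mem_piFinset] at hg
      rw [Finset.mem_Icc, hlenπ]
      constructor
      · calc n = (Finset.univ : Finset (Fin n)).card • 1 := by simp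
          _ ≤ ∑ i, (g i).length :=
            Finset.card_nsmul_le_sum _ _ _ (fun i _ => (hlen _ (hg i)).1)
      · calc ∑ i, (g i).length ≤ (Finset.univ : Finset (Fin n)).card • L :=
            Finset.sum_le_card_nsmul _ _ _ (fun i _ => (hlen _ (hg i)).2)
          _ = n * L := by simp [smul_eq_mul]
    have hstep3 : ∑ w ∈ T, s ^ w.length ≤ ((n * L : ℕ) : ℝ) := by
      rw [← Finset.sum_fiberwise_of_maps_to hmem (fun w => s ^ w.length)]
      calc ∑ ℓ ∈ Finset.Icc n (n*L),
            ∑ w ∈ T.filter (fun w => FreeMonoid.length w = ℓ), s ^ w.length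
          ≤ ∑ _ℓ ∈ Finset.Icc n (n*L), (1:ℝ) := by
            refine Finset.sum_le_sum fun ℓ _ => ?_
            calc ∑ w ∈ T.filter (fun w => FreeMonoid.length w = ℓ), s ^ w.length
                = ((T.filter (fun w => FreeMonoid.length w = ℓ)).card : ℝ) * s ^ ℓ := by
                  rw [Finset.sum_congr rfl (fun w hw => by
                    rw [(Finset.mem_filter.mp hw).2]), Finset.sum_const, nsmul_eq_mul]
              _ ≤ ((r ^ ℓ : ℕ) : ℝ) * s ^ ℓ := by
                  refine mul_le_mul_of_nonneg_right ?_ (by positivity)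
                  exact_mod_cast card_filter_len_le hA T ℓ
              _ = 1 := by
                  rw [hs]
                  push_cast
                  rw [← mul_pow, mul_inv_cancel₀ (ne_of_gt hq0), one_pow]
        _ = ((Finset.Icc n (n*L)).card : ℝ) := by rw [Finset.sum_const]; simp
        _ ≤ ((n * L : ℕ) : ℝ) := by
            rw [Nat.card_Icc]
            exact_mod_cast (by omega : n * L + 1 - n ≤ n * L)
    calc (Kraft r C) ^ n = ∑ w ∈ T, s ^ w.length := by rw [hstep1, hstep2]
      _ ≤ ((n * L : ℕ) : ℝ) := hstep3
      _ = (n : ℝ) * (L : ℝ) := by push_cast; ring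
  -- conclude by contradiction
  by_contra h
  push_neg at h
  set K := Kraft r C with hK
  set ε := K - 1 with hε
  have hε0 : 0 < ε := by simp only [hε]; linarith
  have hLr : (1:ℝ) ≤ (L:ℝ) := by exact_mod_cast hLpos
  obtain ⟨m, hm⟩ := exists_nat_gt (2 * (L:ℝ) / ε ^ 2)
  have hm0 : 0 < (m:ℝ) := lt_of_le_of_lt (by positivity) hm
  have hmnat : 1 ≤ m := Nat.one_le_iff_ne_zero.mpr (by rintro rfl; norm_num at hm0)
  have hKm : (m:ℝ) * ε ≤ K ^ m := by
    have hb := one_add_mul_le_pow (by linarith : (-2:ℝ) ≤ ε) m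
    have hKe : K = 1 + ε := by rw [hε]; ring
    rw [hKe]; linarith
  have hkey := key (2*m) (by omega)
  have h2 : K ^ (2*m) = (K ^ m) ^ 2 := by rw [← pow_mul, mul_comm]
  have hge : ((m:ℝ)*ε)^2 ≤ K ^ (2*m) := by
    rw [h2]
    exact pow_le_pow_left₀ (by positivity) hKm 2
  have hmε : 2 * (L:ℝ) < (m:ℝ) * ε^2 := by
    rw [div_lt_iff₀ (by positivity)] at hm
    linarith
  push_cast at hkey
  nlinarith [hge, hkey, hm0, hmε, mul_lt_mul_of_pos_left hmε hm0]
end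

section
/- If C and D are uniquely decipherable codes with D finer than C (every word of C is a concatenation of words of D), then K(C) ≤ K(D). -/
/-!
Fix a factorization of each word of `C` into at most `M` words of `D`. Factorizing entrywise sends
an `n`-tuple of words of `C` to a tuple of words of `D` of length between `n` and `n * M` with the
same product; it is injective because `C` is uniquely decipherable. Since the weight `r ^ (-|x|)`
is multiplicative, `K(C) ^ n ≤ ∑_{k = n}^{n M} K(D) ^ k`. If `K(D) ≤ 1` the right side is at most
`n M K(D) ^ n`, and letting `n → ∞` gives `K(C) ≤ K(D)`; otherwise `K(C) ≤ 1 < K(D)` by the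
Kraft–McMillan inequality.
-/

open Finset Pointwise

section Tuples

variable {α : Type*} [DecidableEq α]

def tuples (E : Finset α) : ℕ → Finset (List α)
  | 0 => {[]}
  | n + 1 => (E ×ˢ tuples E n).image fun p => p.1 :: p.2

lemma mem_tuples {E : Finset α} {n : ℕ} {l : List α} :
    l ∈ tuples E n ↔ l.length = n ∧ ∀ x ∈ l, x ∈ E := by
  induction n generalizing l with
  | zero => cases l <;> simp [tuples]
  | succ n ih => cases l <;> simp [tuples, ih, and_assoc, and_left_comm]

lemma sum_tuples_prod_map {R : Type*} [CommSemiring R] (E : Finset α) (g : α → R) (n : ℕ) :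
    ∑ l ∈ tuples E n, (l.map g).prod = (∑ x ∈ E, g x) ^ n := by
  induction n with
  | zero => simp [tuples]
  | succ n ih =>
    rw [tuples, sum_image fun p _ q _ h => by simpa [Prod.ext_iff] using h, sum_product,
      pow_succ', ← ih, sum_mul_sum]
    rfl

lemma disjoint_tuples {E : Finset α} {m n : ℕ} (h : m ≠ n) :
    Disjoint (tuples E m) (tuples E n) :=
  disjoint_left.2 fun _ hm hn => h ((mem_tuples.1 hm).1.symm.trans (mem_tuples.1 hn).1)

end Tuples

lemma sum_Icc_pow_le {b : ℝ} (hb₀ : 0 ≤ b) (hb₁ : b ≤ 1) {n : ℕ} (hn : 1 ≤ n) (M : ℕ) :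
    ∑ k ∈ Icc n (n * M), b ^ k ≤ M * n * b ^ n := by
  calc ∑ k ∈ Icc n (n * M), b ^ k
      ≤ ∑ k ∈ Icc n (n * M), b ^ n :=
        sum_le_sum fun k hk => pow_le_pow_of_le_one hb₀ hb₁ (mem_Icc.1 hk).1
    _ = ((n * M + 1 - n : ℕ) : ℝ) * b ^ n := by rw [sum_const, Nat.card_Icc, nsmul_eq_mul]
    _ ≤ M * n * b ^ n := by
        gcongr
        have : n * M + 1 - n ≤ M * n := by rw [Nat.mul_comm]; omega
        exact_mod_cast this

open Filter Topology in
lemma le_of_forall_pow_le_mul_pow {a b c : ℝ} (hb : 0 ≤ b)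
    (h : ∀ n : ℕ, 1 ≤ n → a ^ n ≤ c * n * b ^ n) : a ≤ b := by
  by_contra! hba
  have ha : 0 < a := hb.trans_lt hba
  have hlim : Tendsto (fun n : ℕ => c * (n * (b / a) ^ n)) atTop (𝓝 0) := by
    simpa using (tendsto_self_mul_const_pow_of_lt_one (div_nonneg hb ha.le)
      ((div_lt_one ha).2 hba)).const_mul c
  obtain ⟨n, hsmall, hn⟩ :=
    ((hlim.eventually (gt_mem_nhds one_pos)).and (eventually_ge_atTop 1)).exists
  have hpow : 0 < a ^ n := pow_pos ha n
  rw [div_pow, ← mul_div_assoc, ← mul_div_assoc, div_lt_one hpow, ← mul_assoc] at hsmall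
  exact (h n hn).not_gt hsmall

section Kraft

variable {A : Type*}

lemma zpow_neg_length_prod (r : ℝ) (l : List (FreeMonoid A)) :
    r ^ (-(l.prod.length : ℤ)) = (l.map fun x => r ^ (-(x.length : ℤ))).prod := by
  induction l with
  | nil => simp
  | cons x l ih =>
    simp only [List.prod_cons, List.map_cons, FreeMonoid.length_mul, zpow_neg, zpow_natCast] at ih ⊢
    rw [← ih, pow_add, mul_inv]

lemma kraft_nonneg (r : ℕ) (C : Finset (FreeMonoid A)) : 0 ≤ Kraft r C :=
  sum_nonneg fun _ _ => zpow_nonneg r.cast_nonneg _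

lemma kraft_pow_eq_sum_tuples [DecidableEq A] (r : ℕ) (C : Finset (FreeMonoid A)) (n : ℕ) :
    Kraft r C ^ n = ∑ l ∈ tuples C n, (r : ℝ) ^ (-(l.prod.length : ℤ)) := by
  simp only [zpow_neg_length_prod, sum_tuples_prod_map, Kraft]

lemma IsUD.uniquelyDecodable {C : Finset (FreeMonoid A)} (hC : IsUD C) :
    InformationTheory.UniquelyDecodable ((C.map FreeMonoid.toList.toEmbedding : Finset (List A)) :
      Set (List A)) := by
  intro L₁ L₂ h₁ h₂ hflat
  have hmem : ∀ L : List (List A),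
      (∀ w ∈ L, w ∈ (C.map FreeMonoid.toList.toEmbedding : Set (List A))) →
        ∀ w ∈ L.map FreeMonoid.ofList, w ∈ C := by
    intro L hL w hw
    obtain ⟨u, hu, rfl⟩ := List.mem_map.1 hw
    simpa using hL u hu
  refine List.map_injective_iff.2 FreeMonoid.ofList.injective (hC _ _ (hmem _ h₁) (hmem _ h₂) ?_)
  rw [← FreeMonoid.ofList_flatten, ← FreeMonoid.ofList_flatten, hflat]

lemma kraft_le_one [Fintype A] [Nonempty A] {C : Finset (FreeMonoid A)} (hC : IsUD C) :
    Kraft (Fintype.card A) C ≤ 1 := by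
  simpa [Kraft, FreeMonoid.length, zpow_neg, one_div, inv_pow] using
    InformationTheory.kraft_mcmillan_inequality hC.uniquelyDecodable

end Kraft

section Refinement

variable {A : Type*} {C D : Finset (FreeMonoid A)} {f : FreeMonoid A → List (FreeMonoid A)}

lemma prod_flatten_map_eq (hf : ∀ w ∈ C, (f w).prod = w) {l : List (FreeMonoid A)}
    (hl : ∀ w ∈ l, w ∈ C) : (l.map f).flatten.prod = l.prod := by
  conv_rhs => rw [← List.map_id l]
  simp only [List.prod_flatten, List.map_map]
  exact congrArg _ (List.map_congr_left fun w hw => hf w (hl w hw))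

lemma flatten_map_mem_biUnion_tuples [DecidableEq A] (hne : ∀ w ∈ C, f w ≠ [])
    (hD : ∀ w ∈ C, ∀ v ∈ f w, v ∈ D) {n : ℕ} {l : List (FreeMonoid A)} (hl : l ∈ tuples C n) :
    (l.map f).flatten ∈ (Icc n (n * C.sup fun w => (f w).length)).biUnion (tuples D) := by
  obtain ⟨hlen, hmem⟩ := mem_tuples.1 hl
  have hlength : (l.map f).flatten.length = (l.map fun w => (f w).length).sum := by
    simp [List.length_flatten, Function.comp_def]
  refine mem_biUnion.2 ⟨_, mem_Icc.2 ⟨?_, ?_⟩, mem_tuples.2 ⟨rfl, ?_⟩⟩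
  · rw [hlength, ← hlen, ← List.length_map (f := fun w => (f w).length)]
    refine List.length_le_sum_of_one_le _ fun i hi => ?_
    obtain ⟨w, hw, rfl⟩ := List.mem_map.1 hi
    exact List.length_pos_iff.2 (hne w (hmem w hw))
  · rw [hlength, ← hlen, ← List.length_map (f := fun w => (f w).length), ← smul_eq_mul]
    refine List.sum_le_card_nsmul _ _ fun i hi => ?_
    obtain ⟨w, hw, rfl⟩ := List.mem_map.1 hi
    exact le_sup (f := fun w => (f w).length) (hmem w hw)
  · intro v hv
    obtain ⟨_, hs, hv⟩ := List.mem_flatten.1 hv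
    obtain ⟨w, hw, rfl⟩ := List.mem_map.1 hs
    exact hD w (hmem w hw) v hv

lemma kraft_pow_le_sum_Icc (r : ℕ) (hC : IsUD C)
    (hf : ∀ w ∈ C, f w ≠ [] ∧ (∀ v ∈ f w, v ∈ D) ∧ (f w).prod = w) (n : ℕ) :
    Kraft r C ^ n ≤ ∑ k ∈ Icc n (n * C.sup fun w => (f w).length), Kraft r D ^ k := by
  classical
  let φ : List (FreeMonoid A) → List (FreeMonoid A) := fun l => (l.map f).flatten
  have hprod : ∀ l ∈ tuples C n, (φ l).prod = l.prod := fun l hl =>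
    prod_flatten_map_eq (fun w hw => (hf w hw).2.2) (mem_tuples.1 hl).2
  have hinj : Set.InjOn φ (tuples C n) := fun l₁ h₁ l₂ h₂ h =>
    hC l₁ l₂ (mem_tuples.1 h₁).2 (mem_tuples.1 h₂).2 (by rw [← hprod l₁ h₁, ← hprod l₂ h₂, h])
  calc Kraft r C ^ n
      = ∑ l ∈ tuples C n, (r : ℝ) ^ (-((φ l).prod.length : ℤ)) := by
        rw [kraft_pow_eq_sum_tuples]
        exact sum_congr rfl fun l hl => by rw [hprod l hl]
    _ = ∑ m ∈ (tuples C n).image φ, (r : ℝ) ^ (-(m.prod.length : ℤ)) :=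
        (sum_image (f := fun m => (r : ℝ) ^ (-(m.prod.length : ℤ))) hinj).symm
    _ ≤ ∑ m ∈ (Icc n (n * C.sup fun w => (f w).length)).biUnion (tuples D),
          (r : ℝ) ^ (-(m.prod.length : ℤ)) :=
        sum_le_sum_of_subset_of_nonneg
          (image_subset_iff.2 fun _ hl => flatten_map_mem_biUnion_tuples
            (fun w hw => (hf w hw).1) (fun w hw => (hf w hw).2.1) hl)
          fun _ _ _ => zpow_nonneg r.cast_nonneg _
    _ = ∑ k ∈ Icc n (n * C.sup fun w => (f w).length), Kraft r D ^ k := by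
        rw [sum_biUnion fun _ _ _ _ h => disjoint_tuples h]
        exact sum_congr rfl fun k _ => (kraft_pow_eq_sum_tuples r D k).symm

lemma kraft_le_of_refines (r : ℕ) (hC : IsUD C) (hCD : Refines C D) (hD : Kraft r D ≤ 1) :
    Kraft r C ≤ Kraft r D := by
  choose! f hf using hCD
  exact le_of_forall_pow_le_mul_pow (kraft_nonneg r D) fun n hn =>
    (kraft_pow_le_sum_Icc r hC hf n).trans (sum_Icc_pow_le (kraft_nonneg r D) hD hn _)

end Refinement

theorem stmt_8_general {A : Type*} [Fintype A]
    (hr : 1 ≤ Fintype.card A)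
    (C D : Finset (FreeMonoid A)) (hUDC : IsUD C)
    (hle : Refines C D) :
    Kraft (Fintype.card A) C ≤ Kraft (Fintype.card A) D := by
  rcases le_or_gt (Kraft (Fintype.card A) D) 1 with hD | hD
  · exact kraft_le_of_refines _ hUDC hle hD
  · have : Nonempty A := Fintype.card_pos_iff.1 hr
    exact (kraft_le_one hUDC).trans hD.le

theorem stmt_8 {A : Type*} [Fintype A] [DecidableEq A]
    (hr : 1 ≤ Fintype.card A)
    (C D : Finset (FreeMonoid A)) (hC : (1 : FreeMonoid A) ∉ C)
    (hD : (1 : FreeMonoid A) ∉ D) (hUDC : IsUD C) (hUDD : IsUD D)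
    (hle : Refines C D) :
    Kraft (Fintype.card A) C ≤ Kraft (Fintype.card A) D :=
  stmt_8_general hr C D hUDC hle
end
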